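/- arXiv:1207.0935 — 2 statements merged into one kernel-verified Lean document; each statement's English description precedes it below -/
import Mathlib

section
/- The Two-Extremes mechanism F(x) = (min x, max x) has approximation ratio exactly n − 2 for the social cost of 2-Facility Location on the line with n ≥ 3 agents: for every instance its social cost is at most (n−2) times the optimal social cost, and there exist instances where this bound is tight (achieved in the limit). -/
noncomputable section

/-- Cost of an agent at location `a` under a pair of facilities. -/
def fcost (a : ℝ) (y : ℝ × ℝ) : ℝ := min |a - y.1| |a - y.2|

/-- Social cost: sum of the agents' distances to their nearest facility. -/
def scost {n : ℕ} (x : Fin n → ℝ) (y : ℝ × ℝ) : ℝ := ∑ i, fcost (x i) y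

/-- Optimal social cost over all placements of two facilities. -/
def optCost {n : ℕ} (x : Fin n → ℝ) : ℝ := ⨅ y : ℝ × ℝ, scost x y

/-- The mechanism outputs its facilities in increasing order. -/
def Ordered {n : ℕ} (F : (Fin n → ℝ) → ℝ × ℝ) : Prop := ∀ x, (F x).1 ≤ (F x).2

/-- No agent can strictly decrease her cost by misreporting her location. -/
def Strategyproof {n : ℕ} (F : (Fin n → ℝ) → ℝ × ℝ) : Prop :=
  ∀ (x : Fin n → ℝ) (i : Fin n) (y : ℝ),
    fcost (x i) (F x) ≤ fcost (x i) (F (Function.update x i y))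

/-- `F` has approximation ratio (at most) `ρ` for the social cost. -/
def ApproxRatio {n : ℕ} (F : (Fin n → ℝ) → ℝ × ℝ) (ρ : ℝ) : Prop :=
  ∀ x, scost x (F x) ≤ ρ * optCost x

/-- An `(i|j,k)`-well-separated 3-agent instance. -/
def WellSep (ρ : ℝ) (x : Fin 3 → ℝ) (i j k : Fin 3) : Prop :=
  x i < x j ∧ x j < x k ∧ ρ * (x k - x j) < x j - x i

/-- The Two-Extremes mechanism. -/
def TwoExtremes (n : ℕ) : (Fin n → ℝ) → ℝ × ℝ :=
  fun x => (sInf (Set.range x), sSup (Set.range x))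

/-!
Let `m ≤ M` be the extreme reports and `y` any pair of facilities. For a third agent `p`, two
of the three agents `p`, `m`, `M` share their nearest facility in `y`, so `y` pays at least
the distance between those two, which is at least `fcost p (m, M)`. Summing over the `n - 2`
non-extreme agents gives the bound `n - 2`. It is attained by one agent at `0`, one at `2`
and all others at `1`: Two-Extremes pays `n - 2`, while the pair `(0, 1)` pays `1`.
-/

open Finset

section TwoExcluded

variable {ι : Type*} [Fintype ι] [DecidableEq ι] {f : ι → ℝ} {S : ℝ} {j k : ι}

lemma sum_le_card_sub_two_mul (hjk : j ≠ k) (hj : f j = 0) (hk : f k = 0)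
    (hf : ∀ i, i ≠ j → i ≠ k → f i ≤ S) :
    ∑ i, f i ≤ ((Fintype.card ι : ℝ) - 2) * S := by
  have hcard : #((univ.erase j).erase k) + 2 = Fintype.card ι := by
    rw [card_erase_of_mem (mem_erase.2 ⟨hjk.symm, mem_univ k⟩),
      card_erase_of_mem (mem_univ j), card_univ]
    have : 2 ≤ Fintype.card ι := Fintype.one_lt_card_iff_nontrivial.2 ⟨j, k, hjk⟩
    omega
  rw [← sum_erase univ hj, ← sum_erase _ hk, ← hcard, Nat.cast_add, Nat.cast_two,
    add_sub_cancel_right, ← nsmul_eq_mul]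
  refine sum_le_card_nsmul _ _ _ fun i hi => ?_
  obtain ⟨hik, hi⟩ := mem_erase.1 hi
  exact hf i (mem_erase.1 hi).1 hik

lemma card_sub_two_mul_le_sum (hjk : j ≠ k) (hj : f j = 0) (hk : f k = 0)
    (hf : ∀ i, i ≠ j → i ≠ k → S ≤ f i) :
    ((Fintype.card ι : ℝ) - 2) * S ≤ ∑ i, f i := by
  have := sum_le_card_sub_two_mul (f := -f) (S := -S) hjk (by simp [hj]) (by simp [hk])
    fun i hij hik => neg_le_neg (hf i hij hik)
  simpa [sum_neg_distrib] using this

end TwoExcluded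

lemma fcost_nonneg (a : ℝ) (y : ℝ × ℝ) : 0 ≤ fcost a y :=
  le_min (abs_nonneg _) (abs_nonneg _)

lemma scost_nonneg {n : ℕ} (x : Fin n → ℝ) (y : ℝ × ℝ) : 0 ≤ scost x y :=
  sum_nonneg fun _ _ => fcost_nonneg _ _

lemma fcost_le_fcost_add_fcost_add_fcost {p m M : ℝ} (hm : m ≤ p) (hM : p ≤ M) (y : ℝ × ℝ) :
    fcost p (m, M) ≤ fcost p y + fcost m y + fcost M y := by
  have hpm : fcost p (m, M) ≤ |p - m| := min_le_left _ _
  have hpM : fcost p (m, M) ≤ |p - M| := min_le_right _ _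
  have hmM : fcost p (m, M) ≤ |m - M| :=
    hpm.trans (by rw [abs_of_nonneg (sub_nonneg.2 hm), abs_of_nonpos (by linarith)]; linarith)
  simp only [fcost] at *
  rcases min_choice |p - y.1| |p - y.2| with hp | hp <;>
  rcases min_choice |m - y.1| |m - y.2| with hm' | hm' <;>
  rcases min_choice |M - y.1| |M - y.2| with hM' | hM' <;>
  rw [hp, hm', hM'] <;>
  linarith [abs_sub_le p y.1 m, abs_sub_le p y.2 m, abs_sub_le p y.1 M, abs_sub_le p y.2 M,
    abs_sub_le m y.1 M, abs_sub_le m y.2 M, abs_sub_comm y.1 m, abs_sub_comm y.2 m,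
    abs_sub_comm y.1 M, abs_sub_comm y.2 M, abs_nonneg (p - y.1), abs_nonneg (p - y.2),
    abs_nonneg (m - y.1), abs_nonneg (m - y.2), abs_nonneg (M - y.1), abs_nonneg (M - y.2)]

lemma fcost_add_fcost_add_fcost_le_scost {n : ℕ} (x : Fin n → ℝ) (y : ℝ × ℝ) {i j k : Fin n}
    (hij : i ≠ j) (hik : i ≠ k) (hjk : j ≠ k) :
    fcost (x i) y + fcost (x j) y + fcost (x k) y ≤ scost x y := by
  have h := sum_le_univ_sum_of_nonneg (s := {i, j, k}) fun l => fcost_nonneg (x l) y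
  rwa [sum_insert (by simp [hij, hik]), sum_pair hjk, ← add_assoc] at h

lemma optCost_le {n : ℕ} (x : Fin n → ℝ) (y : ℝ × ℝ) : optCost x ≤ scost x y :=
  ciInf_le ⟨0, by rintro _ ⟨y, rfl⟩; exact scost_nonneg x y⟩ y

lemma optCost_nonneg {n : ℕ} (x : Fin n → ℝ) : 0 ≤ optCost x :=
  le_ciInf (scost_nonneg x)

lemma le_mul_optCost {n : ℕ} {x : Fin n → ℝ} {a c : ℝ} (hc : 0 ≤ c)
    (h : ∀ y, a ≤ c * scost x y) : a ≤ c * optCost x := by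
  rw [optCost, Real.mul_iInf_of_nonneg hc]
  exact le_ciInf h

lemma twoExtremes_eq_of {n : ℕ} {x : Fin n → ℝ} {j k : Fin n} (hj : ∀ i, x j ≤ x i)
    (hk : ∀ i, x i ≤ x k) : TwoExtremes n x = (x j, x k) :=
  Prod.ext (IsLeast.csInf_eq ⟨⟨j, rfl⟩, by rintro _ ⟨i, rfl⟩; exact hj i⟩)
    (IsGreatest.csSup_eq ⟨⟨k, rfl⟩, by rintro _ ⟨i, rfl⟩; exact hk i⟩)

lemma exists_twoExtremes_eq {n : ℕ} (hn : 0 < n) (x : Fin n → ℝ) :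
    ∃ j k, (∀ i, x j ≤ x i ∧ x i ≤ x k) ∧ TwoExtremes n x = (x j, x k) := by
  have : Nonempty (Fin n) := ⟨⟨0, hn⟩⟩
  obtain ⟨j, hj⟩ := Finite.exists_min x
  obtain ⟨k, hk⟩ := Finite.exists_max x
  exact ⟨j, k, fun i => ⟨hj i, hk i⟩, twoExtremes_eq_of hj hk⟩

lemma scost_twoExtremes_le {n : ℕ} (hn : 2 ≤ n) (x : Fin n → ℝ) (y : ℝ × ℝ) :
    scost x (TwoExtremes n x) ≤ ((n : ℝ) - 2) * scost x y := by
  obtain ⟨j, k, hbounds, hTE⟩ := exists_twoExtremes_eq (by omega) x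
  rw [hTE]
  by_cases hjk : x j = x k
  · have hzero : scost x (x j, x k) = 0 :=
      sum_eq_zero fun i _ => by
        simp [fcost, le_antisymm (hjk ▸ (hbounds i).2) (hbounds i).1]
    rw [hzero]
    exact mul_nonneg (by norm_num; exact_mod_cast hn) (scost_nonneg x y)
  · have := sum_le_card_sub_two_mul (f := fun i => fcost (x i) (x j, x k)) (S := scost x y)
      (fun h => hjk (congrArg x h)) (by simp [fcost]) (by simp [fcost])
      fun i hij hik => (fcost_le_fcost_add_fcost_add_fcost (hbounds i).1 (hbounds i).2 y).trans
        (fcost_add_fcost_add_fcost_le_scost x y hij hik fun h => hjk (congrArg x h))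
    simpa [scost] using this

def midCluster {n : ℕ} (j k : Fin n) : Fin n → ℝ :=
  fun i => if i = j then 0 else if i = k then 2 else 1

section MidCluster

variable {n : ℕ} {j k : Fin n}

lemma twoExtremes_midCluster (hjk : j ≠ k) : TwoExtremes n (midCluster j k) = (0, 2) := by
  have hj : midCluster j k j = 0 := by simp [midCluster]
  have hk : midCluster j k k = 2 := by simp [midCluster, hjk.symm]
  rw [← hj, ← hk]
  exact twoExtremes_eq_of (fun i => by rw [hj, midCluster]; split_ifs <;> norm_num)
    fun i => by rw [hk, midCluster]; split_ifs <;> norm_num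

lemma le_scost_midCluster_twoExtremes (hjk : j ≠ k) :
    (n : ℝ) - 2 ≤ scost (midCluster j k) (TwoExtremes n (midCluster j k)) := by
  rw [twoExtremes_midCluster hjk, scost]
  have := card_sub_two_mul_le_sum (f := fun i => fcost (midCluster j k i) (0, 2)) (S := 1) hjk
    (by simp [midCluster, fcost]) (by simp [midCluster, fcost, hjk.symm])
    fun i hij hik => by norm_num [midCluster, fcost, hij, hik]
  simpa using this

lemma optCost_midCluster_le_one : optCost (midCluster j k) ≤ 1 := by
  refine (optCost_le _ (0, 1)).trans ?_
  calc scost (midCluster j k) (0, 1) ≤ ∑ i, if i = k then (1 : ℝ) else 0 :=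
        sum_le_sum fun i _ => by
          unfold midCluster fcost
          split_ifs <;> norm_num
    _ = 1 := by simp

end MidCluster

/-- The Two-Extremes mechanism has approximation ratio exactly `n - 2` for the
social cost with `n ≥ 3` agents: it is an `(n-2)`-approximation, and no
better ratio is valid for it. -/
theorem twoExtremes_approx_exactly (n : ℕ) (hn : 3 ≤ n) :
    (∀ x : Fin n → ℝ, scost x (TwoExtremes n x) ≤ ((n : ℝ) - 2) * optCost x) ∧
    (∀ ρ : ℝ, (∀ x : Fin n → ℝ, scost x (TwoExtremes n x) ≤ ρ * optCost x) →
      (n : ℝ) - 2 ≤ ρ) := by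
  have hn' : (3 : ℝ) ≤ n := by exact_mod_cast hn
  refine ⟨fun x => le_mul_optCost (by linarith) (scost_twoExtremes_le (by omega) x),
    fun ρ hρ => ?_⟩
  set j : Fin n := ⟨0, by omega⟩
  set k : Fin n := ⟨1, by omega⟩
  have hjk : j ≠ k := by simp [j, k]
  have hlow := (le_scost_midCluster_twoExtremes hjk).trans (hρ (midCluster j k))
  have hopt := optCost_midCluster_le_one (j := j) (k := k)
  have hρ0 : 0 ≤ ρ := by
    by_contra! hneg
    nlinarith [optCost_nonneg (midCluster j k)]
  nlinarith [mul_le_mul_of_nonneg_left hopt hρ0]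
end
end

section
/- Let F be a strategyproof 2-facility mechanism on the line with approximation ratio at most ρ for 3 agents, let (i, a) have left-threshold p and preferred agent j (in the sense of Lemma i-separated). Then for any 3-agent instance x with a = x_i < min(x_j, x_k) and x_j ≥ p, F places a facility at x_j. -/
/-!
Move agent `j` along the line, keeping the others fixed, and let `S` be the image set of `j`:
the reports at which `j` obtains a facility there. By strategyproofness every facility lies in
`S` and `j`'s cost is at most its distance to `S`. If `t ≥ p` is not in `S`, every facility of the profile with `j` at `t` is
at distance at least `δ(t) = 2 (t - a) / (ρ + 2)` from `t`: otherwise agent `k`, placed between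
`t` and that facility so that the profile is `i`-left-well-separated (hence has a facility at
`t`), would gain by moving back. As `δ` increases, if `x j ∉ S` then every point of the hole of
`S` containing `x j` and to the right of it is at distance `≥ δ(x j)` from `S`, so the hole
never ends; but `S` is unbounded above by the approximation ratio.
-/

noncomputable section

/-- An `i`-left-well-separated 3-agent instance: agent `i` is isolated on the
left of the two nearby agents `j` and `k`. -/
def LeftWS (ρ : ℝ) (x : Fin 3 → ℝ) (i j k : Fin 3) : Prop :=
  x i < min (x j) (x k) ∧
    ρ * (max (x j) (x k) - min (x j) (x k)) < min (x j) (x k) - x i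

/-- The median of three reals. -/
def med3 (a b c : ℝ) : ℝ := max (min a b) (min (max a b) c)

open Function

def IsFacility (Y : ℝ × ℝ) (f : ℝ) : Prop := Y.1 = f ∨ Y.2 = f

def imageSet {n : ℕ} (F : (Fin n → ℝ) → ℝ × ℝ) (x : Fin n → ℝ) (j : Fin n) : Set ℝ :=
  {q | IsFacility (F (update x j q)) q}

lemma fcost_nonneg_s14 (t : ℝ) (Y : ℝ × ℝ) : 0 ≤ fcost t Y :=
  le_min (abs_nonneg _) (abs_nonneg _)

lemma fcost_le_of_isFacility {Y : ℝ × ℝ} {f : ℝ} (hf : IsFacility Y f) (t : ℝ) :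
    fcost t Y ≤ |t - f| := by
  rcases hf with rfl | rfl
  exacts [min_le_left _ _, min_le_right _ _]

lemma exists_isFacility_abs_sub_eq_fcost (t : ℝ) (Y : ℝ × ℝ) :
    ∃ f, IsFacility Y f ∧ |t - f| = fcost t Y := by
  rcases min_choice |t - Y.1| |t - Y.2| with h | h
  exacts [⟨Y.1, Or.inl rfl, h.symm⟩, ⟨Y.2, Or.inr rfl, h.symm⟩]

lemma isFacility_of_fcost_nonpos {t : ℝ} {Y : ℝ × ℝ} (h : fcost t Y ≤ 0) : IsFacility Y t := by
  obtain ⟨f, hf, hft⟩ := exists_isFacility_abs_sub_eq_fcost t Y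
  rwa [abs_eq_zero.mp (hft.trans_le h |>.antisymm (abs_nonneg _)) |> sub_eq_zero.mp]

lemma fcost_le_scost {n : ℕ} (x : Fin n → ℝ) (m : Fin n) (Y : ℝ × ℝ) :
    fcost (x m) Y ≤ scost x Y :=
  Finset.single_le_sum (fun _ _ => fcost_nonneg_s14 _ _) (Finset.mem_univ m)

lemma optCost_le_scost {n : ℕ} (x : Fin n → ℝ) (Y : ℝ × ℝ) : optCost x ≤ scost x Y :=
  ciInf_le ⟨0, by rintro _ ⟨Z, rfl⟩; exact Finset.sum_nonneg fun _ _ => fcost_nonneg_s14 _ _⟩ Y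

namespace Strategyproof

variable {n : ℕ} {F : (Fin n → ℝ) → ℝ × ℝ}

lemma fcost_update_le (hsp : Strategyproof F) (x : Fin n → ℝ) (k : Fin n) (w : ℝ) :
    fcost w (F (update x k w)) ≤ fcost w (F x) := by
  simpa using hsp (update x k w) k (x k)

lemma fcost_update_le_of_isFacility (hsp : Strategyproof F) {x : Fin n → ℝ} {f : ℝ}
    (hf : IsFacility (F x) f) (k : Fin n) (w : ℝ) : fcost w (F (update x k w)) ≤ |w - f| :=
  (hsp.fcost_update_le x k w).trans (fcost_le_of_isFacility hf w)

lemma fcost_le_of_mem_imageSet (hsp : Strategyproof F) {x : Fin n → ℝ} {j : Fin n} {q : ℝ}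
    (hq : q ∈ imageSet F x j) (t : ℝ) : fcost t (F (update x j t)) ≤ |t - q| := by
  simpa using hsp.fcost_update_le_of_isFacility hq j t

lemma mem_imageSet (hsp : Strategyproof F) {x : Fin n → ℝ} {j : Fin n} {t f : ℝ}
    (hf : IsFacility (F (update x j t)) f) : f ∈ imageSet F x j :=
  isFacility_of_fcost_nonpos <| by simpa using hsp.fcost_update_le_of_isFacility hf j f

end Strategyproof

section ThreeAgents

variable {i j k : Fin 3}

lemma scost_eq_add_add (hij : i ≠ j) (hik : i ≠ k) (hjk : j ≠ k) (x : Fin 3 → ℝ)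
    (Y : ℝ × ℝ) : scost x Y = fcost (x i) Y + fcost (x j) Y + fcost (x k) Y := by
  have huniv : ({i, j, k} : Finset (Fin 3)) = Finset.univ :=
    Finset.eq_univ_of_card _ (by rw [Finset.card_insert_of_notMem (by simp [hij, hik]),
      Finset.card_insert_of_notMem (by simp [hjk]), Finset.card_singleton]; rfl)
  rw [scost, ← huniv, Finset.sum_insert (by simp [hij, hik]), Finset.sum_insert (by simp [hjk]),
    Finset.sum_singleton, add_assoc]

/-- Facilities at `x i` and at the midpoint of `x j` and `x k`. -/
lemma optCost_le_abs_sub (hij : i ≠ j) (hik : i ≠ k) (hjk : j ≠ k) (x : Fin 3 → ℝ) :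
    optCost x ≤ |x j - x k| := by
  set Y : ℝ × ℝ := (x i, (x j + x k) / 2)
  have hi : fcost (x i) Y ≤ 0 := by
    simpa [Y] using fcost_le_of_isFacility (Y := Y) (Or.inl rfl) (x i)
  have hj : fcost (x j) Y ≤ |x j - x k| / 2 := by
    have := fcost_le_of_isFacility (Y := Y) (Or.inr rfl) (x j)
    rwa [show x j - (x j + x k) / 2 = (x j - x k) / 2 by ring, abs_div, abs_two] at this
  have hk : fcost (x k) Y ≤ |x j - x k| / 2 := by
    have := fcost_le_of_isFacility (Y := Y) (Or.inr rfl) (x k)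
    rwa [show x k - (x j + x k) / 2 = -((x j - x k) / 2) by ring, abs_neg, abs_div,
      abs_two] at this
  linarith [optCost_le_scost x Y, scost_eq_add_add hij hik hjk x Y]

lemma ApproxRatio.fcost_le {F : (Fin 3 → ℝ) → ℝ × ℝ} {ρ : ℝ} (happ : ApproxRatio F ρ)
    (hρ : 0 ≤ ρ) (hij : i ≠ j) (hik : i ≠ k) (hjk : j ≠ k) (x : Fin 3 → ℝ) (m : Fin 3) :
    fcost (x m) (F x) ≤ ρ * |x j - x k| :=
  (fcost_le_scost x m _).trans <| (happ x).trans <|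
    mul_le_mul_of_nonneg_left (optCost_le_abs_sub hij hik hjk x) hρ

lemma Strategyproof.exists_mem_imageSet_gt {F : (Fin 3 → ℝ) → ℝ × ℝ} {ρ : ℝ}
    (hsp : Strategyproof F) (happ : ApproxRatio F ρ) (hρ : 0 ≤ ρ) (hij : i ≠ j) (hik : i ≠ k)
    (hjk : j ≠ k) (x : Fin 3 → ℝ) (c : ℝ) : ∃ q ∈ imageSet F x j, c < q := by
  set t := c + ρ * |x i - x k| + 1
  have hcost : fcost t (F (update x j t)) ≤ ρ * |x i - x k| := by
    simpa [hij, hjk.symm] using happ.fcost_le hρ hij.symm hjk hik (update x j t) j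
  obtain ⟨f, hf, hft⟩ := exists_isFacility_abs_sub_eq_fcost t (F (update x j t))
  exact ⟨f, hsp.mem_imageSet hf, by linarith [le_abs_self (t - f)]⟩

end ThreeAgents

lemma forall_mem_lt_of_gap {S : Set ℝ} {c δ : ℝ} (hδ : 0 < δ) (hc : c ∉ S)
    (hgap : ∀ t, c ≤ t → t ∉ S → ∀ q ∈ S, δ ≤ |t - q|) : ∀ q ∈ S, q < c := by
  by_contra! ⟨q₀, hq₀S, hcq₀⟩
  set T := S ∩ Set.Ici c
  have hT : T.Nonempty := ⟨q₀, hq₀S, hcq₀⟩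
  have hTbdd : BddBelow T := ⟨c, fun _ hq => hq.2⟩
  have hr : c + δ ≤ sInf T := le_csInf hT fun q ⟨hqS, hcq⟩ => by
    have := hgap c le_rfl hc q hqS
    rw [abs_sub_comm, abs_of_nonneg (sub_nonneg.2 hcq)] at this
    linarith
  -- `t` lies in the hole of `S` that ends at `sInf T`, but closer than `δ` to its end
  set t := sInf T - δ / 2 with ht
  have htS : t ∉ S := fun htS => by
    have := csInf_le hTbdd (show t ∈ T from ⟨htS, by simp only [Set.mem_Ici]; linarith⟩)
    linarith
  obtain ⟨q, hqT, hqr⟩ := exists_lt_of_csInf_lt hT (show sInf T < sInf T + δ / 2 by linarith)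
  have hrq := csInf_le hTbdd hqT
  have hδq := hgap t (by linarith) htS q hqT.1
  rw [abs_sub_comm, abs_of_nonneg (by linarith)] at hδq
  linarith

/-- The half `y j ≥ p` of "`(i, a)` has left-threshold `p` and preferred agent `j`". -/
def LeftThreshold (F : (Fin 3 → ℝ) → ℝ × ℝ) (ρ : ℝ) (i j k : Fin 3) (a p : ℝ) : Prop :=
  ∀ y : Fin 3 → ℝ, y i = a → LeftWS ρ y i j k → p ≤ y j → (F y).2 = y j

section Exclusion

variable {F : (Fin 3 → ℝ) → ℝ × ℝ} {ρ a p : ℝ} {i j k : Fin 3} {y : Fin 3 → ℝ} {f : ℝ}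

lemma snd_update_eq_of_leftWS (hsep : LeftThreshold F ρ i j k a p) (hik : i ≠ k) (hjk : j ≠ k)
    (hya : y i = a) (hp : p ≤ y j) {w : ℝ} (ha : a < min (y j) w)
    (hws : ρ * |y j - w| < min (y j) w - a) :
    (F (update y k w)).2 = y j := by
  have hy : LeftWS ρ (update y k w) i j k := by
    simpa [LeftWS, hik, hjk, hya, max_sub_min_eq_abs'] using And.intro ha hws
  simpa [hjk] using hsep _ (by simpa [hik] using hya) hy (by simpa [hjk] using hp)

lemma two_mul_sub_le_of_isFacility_of_gt (hord : Ordered F) (hsp : Strategyproof F)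
    (hsep : LeftThreshold F ρ i j k a p) (hρ : 0 < ρ) (hik : i ≠ k) (hjk : j ≠ k)
    (hya : y i = a) (hp : p ≤ y j) (hf : IsFacility (F y) f) (hlt : y j < f) :
    2 * (y j - a) ≤ ρ * (f - y j) := by
  set t := y j
  by_contra! hclose
  have hat : a < t := by linarith [mul_pos hρ (sub_pos.2 hlt)]
  obtain ⟨w, hfw, hwt⟩ : ∃ w, (t + f) / 2 < w ∧ w < t + (t - a) / ρ :=
    exists_between <| by rw [← sub_lt_iff_lt_add', lt_div_iff₀' hρ]; linarith
  have htw : t < w := by linarith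
  have hws : ρ * (w - t) < t - a := by rwa [← sub_lt_iff_lt_add', lt_div_iff₀' hρ] at hwt
  have hF₂ : (F (update y k w)).2 = t := snd_update_eq_of_leftWS hsep hik hjk hya hp
    (by rwa [min_eq_left htw.le])
    (by rwa [min_eq_left htw.le, abs_sub_comm, abs_of_pos (sub_pos.2 htw)])
  have hF₁ : (F (update y k w)).1 ≤ t := hF₂ ▸ hord _
  have hcost : w - t ≤ fcost w (F (update y k w)) :=
    le_min (by linarith [le_abs_self (w - (F (update y k w)).1)])
      (by rw [hF₂]; exact le_abs_self _)
  have hdev := hsp.fcost_update_le_of_isFacility hf k w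
  have hwf : |w - f| < w - t := abs_lt.mpr ⟨by linarith, by linarith⟩
  linarith

lemma two_mul_sub_le_of_isFacility_of_lt (hsp : Strategyproof F) (happ : ApproxRatio F ρ)
    (hsep : LeftThreshold F ρ i j k a p) (hρ : 0 ≤ ρ) (hij : i ≠ j) (hik : i ≠ k) (hjk : j ≠ k)
    (hya : y i = a) (hp : p ≤ y j) (hf : IsFacility (F y) f) (hlt : f < y j) :
    2 * (y j - a) ≤ (ρ + 2) * (y j - f) := by
  set t := y j
  by_contra! hclose
  have hat : a < t := by nlinarith
  obtain ⟨w, hw, hwf⟩ : ∃ w, (1 + ρ) * t + a < (ρ + 2) * w ∧ w < (t + f) / 2 := by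
    obtain ⟨w, hw, hwf⟩ := exists_between <| show ((1 + ρ) * t + a) / (ρ + 2) < (t + f) / 2 by
      rw [div_lt_iff₀ (by linarith)]; linarith
    exact ⟨w, by rwa [div_lt_iff₀' (by linarith)] at hw, hwf⟩
  have hwt : w < t := by linarith
  have haw : a < w := by nlinarith
  have hws : ρ * (t - w) < w - a := by linarith
  have hF₂ : (F (update y k w)).2 = t := snd_update_eq_of_leftWS hsep hik hjk hya hp
    (by rwa [min_eq_right hwt.le]) (by rwa [min_eq_right hwt.le, abs_of_pos (sub_pos.2 hwt)])
  -- agent `i` is served within `ρ (t - w)`, so not by the facility at `t`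
  have hF₁ : |a - (F (update y k w)).1| ≤ ρ * (t - w) := by
    have hi := happ.fcost_le hρ hij hik hjk (update y k w) i
    simp only [update_of_ne hik, update_of_ne hjk, update_self, hya] at hi
    rw [abs_of_pos (sub_pos.2 hwt)] at hi
    refine (min_le_iff.mp hi).resolve_right fun h => ?_
    rw [hF₂, abs_sub_comm, abs_of_pos (sub_pos.2 hat)] at h
    linarith
  have hcost : t - w ≤ fcost w (F (update y k w)) :=
    le_min (by linarith [(abs_le.mp hF₁).1, le_abs_self (w - (F (update y k w)).1)])
      (by rw [hF₂, abs_sub_comm, abs_of_pos (sub_pos.2 hwt)])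
  have hdev := hsp.fcost_update_le_of_isFacility hf k w
  have hwf : |w - f| < t - w := abs_lt.mpr ⟨by linarith, by linarith⟩
  linarith

lemma two_mul_sub_le_of_isFacility (hord : Ordered F) (hsp : Strategyproof F)
    (happ : ApproxRatio F ρ) (hsep : LeftThreshold F ρ i j k a p) (hρ : 0 < ρ) (hij : i ≠ j)
    (hik : i ≠ k) (hjk : j ≠ k) (hya : y i = a) (hp : p ≤ y j) (hf : IsFacility (F y) f)
    (hne : f ≠ y j) : 2 * (y j - a) ≤ (ρ + 2) * |y j - f| := by
  rcases hne.lt_or_gt with hlt | hgt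
  · rw [abs_of_pos (sub_pos.2 hlt)]
    exact two_mul_sub_le_of_isFacility_of_lt hsp happ hsep hρ.le hij hik hjk hya hp hf hlt
  · rw [abs_of_neg (sub_neg.2 hgt)]
    linarith [two_mul_sub_le_of_isFacility_of_gt hord hsp hsep hρ hik hjk hya hp hf hgt]

end Exclusion

theorem non_separated_general (F : (Fin 3 → ℝ) → ℝ × ℝ) (ρ : ℝ) (hρ : 1 ≤ ρ)
    (hord : Ordered F) (hsp : Strategyproof F) (happ : ApproxRatio F ρ)
    (i j k : Fin 3) (hij : i ≠ j) (hik : i ≠ k) (hjk : j ≠ k)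
    (a p : ℝ)
    (hsep : ∀ y : Fin 3 → ℝ, y i = a → LeftWS ρ y i j k →
      (p ≤ y j → (F y).2 = y j) ∧ (y j < p → (F y).2 = med3 p (y j) (y k)))
    (x : Fin 3 → ℝ) (hxa : x i = a) (hxj : x i < x j)
    (hjp : p ≤ x j) :
    (F x).1 = x j ∨ (F x).2 = x j := by
  have hρ₀ : 0 < ρ := by linarith
  set S := imageSet F x j
  suffices x j ∈ S by simpa [S, imageSet, IsFacility] using this
  by_contra hS
  set δ := 2 * (x j - a) / (ρ + 2)
  have hgap : ∀ t, x j ≤ t → t ∉ S → ∀ q ∈ S, δ ≤ |t - q| := by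
    intro t ht htS q hq
    obtain ⟨f, hf, hft⟩ := exists_isFacility_abs_sub_eq_fcost t (F (update x j t))
    have hexcl := two_mul_sub_le_of_isFacility hord hsp happ (fun y hya hy => (hsep y hya hy).1)
      hρ₀ hij hik hjk (y := update x j t) (by simp [hij, hxa]) (by simp; linarith) hf
      fun hft' => htS (by simpa [hft'] using hsp.mem_imageSet hf)
    simp only [update_self] at hexcl
    rw [div_le_iff₀' (by linarith)]
    calc 2 * (x j - a) ≤ 2 * (t - a) := by linarith
      _ ≤ (ρ + 2) * fcost t (F (update x j t)) := hft ▸ hexcl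
      _ ≤ (ρ + 2) * |t - q| :=
        mul_le_mul_of_nonneg_left (hsp.fcost_le_of_mem_imageSet hq t) (by linarith)
  obtain ⟨q, hq, hxq⟩ := hsp.exists_mem_imageSet_gt happ hρ₀.le hij hik hjk x (x j)
  exact (forall_mem_lt_of_gap (div_pos (by linarith) (by linarith)) hS hgap q hq).not_gt hxq

/-- Lemma `non-separated`: if `(i, a)` has left-preferred agent `j` and finite
left-threshold `p` (in the sense of Lemma `i-separated`), then for any 3-agent
instance `x` with `a = x_i < min(x_j, x_k)` and `x_j ≥ p`, `F` places a
facility at `x_j`. -/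
theorem non_separated (F : (Fin 3 → ℝ) → ℝ × ℝ) (ρ : ℝ) (hρ : 1 ≤ ρ)
    (hord : Ordered F) (hsp : Strategyproof F) (happ : ApproxRatio F ρ)
    (i j k : Fin 3) (hij : i ≠ j) (hik : i ≠ k) (hjk : j ≠ k)
    (a p : ℝ) (hpa : a ≤ p)
    (hsep : ∀ y : Fin 3 → ℝ, y i = a → LeftWS ρ y i j k →
      (p ≤ y j → (F y).2 = y j) ∧ (y j < p → (F y).2 = med3 p (y j) (y k)))
    (x : Fin 3 → ℝ) (hxa : x i = a) (hxj : x i < x j) (hxk : x i < x k)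
    (hjp : p ≤ x j) :
    (F x).1 = x j ∨ (F x).2 = x j :=
  non_separated_general F ρ hρ hord hsp happ i j k hij hik hjk a p hsep x hxa hxj hjp

end
end
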